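/- Fix k ≥ 2 and ℓ ≥ 0. Then the pair (k₂, ℓ₂) with k₂ ≥ 1 and ℓ₂ ≥ 0 satisfying both (i) 5^k·(4ℓ+5) − 4·r'(k−1) ≤ 5^(k₂)·(4ℓ₂+5) < 5^k·(4ℓ+5), and (ii) 5^(k₂)·(4ℓ₂+1) ≤ 5^k·(4ℓ+1), exists, is unique, and equals (k₂, ℓ₂) = (k−1, 5ℓ+1). -/
import Mathlib

def r5' : ℕ → ℕ
  | 0 => 4
  | 1 => 20
  | j + 2 => r5' j + 4 * 5 ^ (j + 2) - 1

lemma r5'_lb : ∀ j, 4 * 5 ^ j ≤ r5' j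
  | 0 => by norm_num [r5']
  | 1 => by norm_num [r5']
  | j + 2 => by
      have h := r5'_lb j
      have h1 : 1 ≤ 5 ^ j := Nat.one_le_pow _ _ (by norm_num)
      have e : (5:ℕ) ^ (j+2) = 25 * 5 ^ j := by ring
      show 4 * 5 ^ (j+2) ≤ r5' j + 4 * 5 ^ (j + 2) - 1
      omega

lemma r5'_ub : ∀ j, r5' (j+1) + 5 ^ j < 5 ^ (j+2)
  | 0 => by norm_num [r5']
  | 1 => by norm_num [r5']
  | j + 2 => by
      have h := r5'_ub j
      have e1 : (5:ℕ) ^ (j+3) = 125 * 5 ^ j := by ring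
      have e2 : (5:ℕ) ^ (j+2) = 25 * 5 ^ j := by ring
      have e3 : (5:ℕ) ^ (j+4) = 625 * 5 ^ j := by ring
      show r5' (j+1) + 4 * 5 ^ (j+3) - 1 + 5 ^ (j+2) < 5 ^ (j+4)
      omega

lemma pow5_mod4 (d : ℕ) : ∃ t : ℤ, (5:ℤ) ^ d = 4 * t + 1 := by
  induction d with
  | zero => exact ⟨0, by norm_num⟩
  | succ n ih =>
      obtain ⟨t, ht⟩ := ih
      exact ⟨5 * t + 1, by rw [pow_succ, ht]; ring⟩

theorem stmt16 (k l : ℕ) (hk : 2 ≤ k) :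
    ∀ k₂ l₂ : ℕ, 1 ≤ k₂ →
      (((5 : ℤ) ^ k * (4 * l + 5) - 4 * (r5' (k - 1) : ℤ) ≤ (5 : ℤ) ^ k₂ * (4 * l₂ + 5) ∧
          (5 : ℤ) ^ k₂ * (4 * l₂ + 5) < (5 : ℤ) ^ k * (4 * l + 5) ∧
          (5 : ℤ) ^ k₂ * (4 * l₂ + 1) ≤ (5 : ℤ) ^ k * (4 * l + 1)) ↔
        (k₂ = k - 1 ∧ l₂ = 5 * l + 1)) := by
  obtain ⟨m, rfl⟩ : ∃ m, k = m + 2 := ⟨k - 2, by omega⟩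
  have hk1 : m + 2 - 1 = m + 1 := rfl
  rw [hk1]
  intro k₂ l₂ hk₂
  have hub := r5'_ub m
  have hubZ : (r5' (m+1) : ℤ) + 5 ^ m < 5 ^ (m+2) := by exact_mod_cast hub
  have hlbZ : 4 * (5:ℤ) ^ (m+1) ≤ (r5' (m+1) : ℤ) := by exact_mod_cast r5'_lb (m+1)
  have hpm : (0:ℤ) < 5 ^ m := by positivity
  constructor
  · rintro ⟨h1, h2, h3⟩
    -- derive lower bound: 5^(m+2)*(4l+1) < 5^k₂*(4l₂+5)
    have hlow : (5:ℤ) ^ (m+2) * (4 * l + 1) < (5:ℤ) ^ k₂ * (4 * l₂ + 5) := by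
      nlinarith [h1, hubZ, hpm]
    -- rule out k₂ ≥ m+2
    have hklt : k₂ < m + 2 := by
      by_contra hge
      push_neg at hge
      obtain ⟨d, hd⟩ : ∃ d, k₂ = (m + 2) + d := ⟨k₂ - (m+2), by omega⟩
      subst hd
      have epow : (5:ℤ) ^ (m + 2 + d) = 5 ^ (m+2) * 5 ^ d := pow_add 5 (m+2) d
      rw [epow, mul_assoc] at hlow h2
      have hp : (0:ℤ) < 5 ^ (m+2) := by positivity
      have hlow' : (4 * (l:ℤ) + 1) < 5 ^ d * (4 * l₂ + 5) :=
        lt_of_mul_lt_mul_left hlow (le_of_lt hp)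
      have h2' : (5:ℤ) ^ d * (4 * l₂ + 5) < 4 * l + 5 :=
        lt_of_mul_lt_mul_left h2 (le_of_lt hp)
      obtain ⟨t, ht⟩ := pow5_mod4 d
      rw [ht] at hlow' h2'
      have e : (4 * t + 1) * (4 * (l₂:ℤ) + 5) = 4 * (t * (4 * l₂ + 5)) + (4 * l₂ + 5) := by ring
      rw [e] at hlow' h2'
      set u := t * (4 * (l₂:ℤ) + 5)
      omega
    -- so m+2 = k₂ + e with e ≥ 1
    obtain ⟨e, he, he1⟩ : ∃ e, m + 2 = k₂ + e ∧ 1 ≤ e := ⟨m + 2 - k₂, by omega, by omega⟩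
    have hp2 : (0:ℤ) < 5 ^ k₂ := by positivity
    rw [he, pow_add, mul_assoc] at hlow h3
    have hlow' : (5:ℤ) ^ e * (4 * l + 1) < 4 * l₂ + 5 :=
      lt_of_mul_lt_mul_left hlow (le_of_lt hp2)
    have h3' : (4 * (l₂:ℤ) + 1) ≤ 5 ^ e * (4 * l + 1) :=
      le_of_mul_le_mul_left h3 hp2
    obtain ⟨t, ht⟩ := pow5_mod4 e
    have e2 : (5:ℤ) ^ e * (4 * l + 1) = 4 * (t * (4 * l + 1) + l) + 1 := by rw [ht]; ring
    rw [e2] at hlow' h3'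
    set y := t * (4 * (l:ℤ) + 1) + l with hy
    have hl₂ : (l₂:ℤ) = y := by omega
    -- now 4l₂+1 = 5^e*(4l+1); plug into h1
    have heq : 4 * (l₂:ℤ) + 1 = 5 ^ e * (4 * l + 1) := by rw [e2]; omega
    have hval : (5:ℤ) ^ k₂ * (4 * l₂ + 5) = 5 ^ (m+2) * (4 * l + 1) + 4 * 5 ^ k₂ := by
      have : (4 * (l₂:ℤ) + 5) = 5 ^ e * (4 * l + 1) + 4 := by linarith
      rw [this, he, pow_add]; ring
    rw [hval] at h1
    -- h1 : 5^(m+2)*(4l+5) - 4*r' ≤ 5^(m+2)*(4l+1) + 4*5^k₂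
    have h5 : (5:ℤ) ^ m < 5 ^ k₂ := by nlinarith [h1, hubZ]
    have hmk : m < k₂ := by
      by_contra hle
      push_neg at hle
      exact absurd (pow_le_pow_right₀ (by norm_num : (1:ℤ) ≤ 5) hle) (not_le.mpr h5)
    have hk₂' : k₂ = m + 1 := by omega
    have he' : e = 1 := by omega
    rw [he'] at heq
    constructor
    · exact hk₂'
    · have : (l₂:ℤ) = 5 * l + 1 := by push_cast at heq ⊢; linarith
      exact_mod_cast this
  · rintro ⟨rfl, rfl⟩
    have e1 : ((5:ℤ) ^ (m+2)) = 5 * 5 ^ (m+1) := by ring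
    push_cast
    refine ⟨by nlinarith [hlbZ], by nlinarith [hpm], by nlinarith⟩
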